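/- In a dagger kernel category, in any commuting square m ∘ f = g ∘ e where e is a zero-epi and m is a kernel, there exists a unique diagonal d with m ∘ d = g and d ∘ e = f. Hence zero-epis and kernels form a factorisation system. -/

import Mathlib

open CategoryTheory Limits

universe v u

class Dagger (C : Type u) [Category.{v} C] [HasZeroMorphisms C] where
  dag : ∀ {X Y : C}, (X ⟶ Y) → (Y ⟶ X)
  dag_dag : ∀ {X Y : C} (f : X ⟶ Y), dag (dag f) = f
  dag_comp : ∀ {X Y Z : C} (f : X ⟶ Y) (g : Y ⟶ Z), dag (f ≫ g) = dag g ≫ dag f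
  dag_id : ∀ (X : C), dag (𝟙 X) = 𝟙 X
  dag_zero : ∀ (X Y : C), dag (0 : X ⟶ Y) = 0

namespace Dagger

variable {C : Type u} [Category.{v} C] [HasZeroMorphisms C] [Dagger C]

/-- `f` is a dagger mono: `f† ∘ f = id`. -/
def DaggerMono {X Y : C} (f : X ⟶ Y) : Prop := f ≫ dag f = 𝟙 X

/-- `f` is a dagger epi: `f ∘ f† = id`. -/
def DaggerEpi {X Y : C} (f : X ⟶ Y) : Prop := dag f ≫ f = 𝟙 Y

/-- `k` is a kernel of `f`. -/
structure IsKer {K X Y : C} (f : X ⟶ Y) (k : K ⟶ X) : Prop where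
  comp_zero : k ≫ f = 0
  lift : ∀ {Z : C} (g : Z ⟶ X), g ≫ f = 0 → ∃! h : Z ⟶ K, h ≫ k = g

/-- `k` is a kernel of `f` which is moreover a dagger mono. -/
def IsDagKer {K X Y : C} (f : X ⟶ Y) (k : K ⟶ X) : Prop :=
  IsKer f k ∧ DaggerMono k

/-- `k` is a (dagger-monic) kernel of some map. -/
def KernelMap {K X : C} (k : K ⟶ X) : Prop :=
  ∃ (Y : C) (f : X ⟶ Y), IsDagKer f k

/-- order of subobjects, by factorisation -/
def SubLE {M N X : C} (m : M ⟶ X) (n : N ⟶ X) : Prop :=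
  ∃ φ : M ⟶ N, φ ≫ n = m

/-- equality of subobjects -/
def SubEq {M N X : C} (m : M ⟶ X) (n : N ⟶ X) : Prop :=
  SubLE m n ∧ SubLE n m

/-- `p` represents the orthocomplement `m^⊥ = ker(m†)` of `m`. -/
def IsOrthoOf {M P X : C} (m : M ⟶ X) (p : P ⟶ X) : Prop :=
  IsDagKer (dag m) p

/-- `w` is the meet (intersection) of the kernels `m` and `n` in `KSub(X)`. -/
def IsMeet {M N W X : C} (m : M ⟶ X) (n : N ⟶ X) (w : W ⟶ X) : Prop :=
  KernelMap w ∧ SubLE w m ∧ SubLE w n ∧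
    ∀ {K : C} (k : K ⟶ X), KernelMap k → SubLE k m → SubLE k n → SubLE k w

/-- `j` is the join `m ∨ n = (m^⊥ ∧ n^⊥)^⊥` in `KSub(X)`. -/
def IsJoin {M N J X : C} (m : M ⟶ X) (n : N ⟶ X) (j : J ⟶ X) : Prop :=
  ∃ (MP NP W : C) (mp : MP ⟶ X) (np : NP ⟶ X) (w : W ⟶ X),
    IsOrthoOf m mp ∧ IsOrthoOf n np ∧ IsMeet mp np w ∧ IsOrthoOf w j

/-- `p` represents the pullback `f⁻¹(n) = ker(coker(n) ∘ f)` of the kernel `n` along `f`. -/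
def IsInvImg {N P X Y : C} (f : X ⟶ Y) (n : N ⟶ Y) (p : P ⟶ X) : Prop :=
  ∃ (NP : C) (np : NP ⟶ Y), IsOrthoOf n np ∧ IsDagKer (f ≫ dag np) p

/-- `i` represents the image `ker(coker(f)) = ker(ker(f†)†)` of `f`. -/
def IsImg {I X Y : C} (f : X ⟶ Y) (i : I ⟶ Y) : Prop :=
  ∃ (K : C) (k : K ⟶ Y), IsDagKer (dag f) k ∧ IsDagKer (dag k) i

/-- zero-mono: `m ∘ f = 0` implies `f = 0`. -/
def ZeroMono {X Y : C} (m : X ⟶ Y) : Prop :=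
  ∀ {Z : C} (f : Z ⟶ X), f ≫ m = 0 → f = 0

/-- zero-epi: `f ∘ e = 0` implies `f = 0`. -/
def ZeroEpi {X Y : C} (e : X ⟶ Y) : Prop :=
  ∀ {Z : C} (f : Y ⟶ Z), e ≫ f = 0 → f = 0

end Dagger

/-- A dagger kernel category: a dagger category with a zero object in which
every morphism has a kernel that is a dagger mono. -/
class DagKerCat (C : Type u) [Category.{v} C] [HasZeroMorphisms C]
    [HasZeroObject C] extends Dagger C where
  hasKer : ∀ {X Y : C} (f : X ⟶ Y), ∃ (K : C) (k : K ⟶ X), Dagger.IsDagKer f k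

namespace Dagger

variable {C : Type u} [Category.{v} C] [HasZeroMorphisms C]

theorem IsKer.mono {K X Y : C} {f : X ⟶ Y} {k : K ⟶ X} (hk : IsKer f k) : Mono k where
  right_cancellation a b hab := by
    have hb : (b ≫ k) ≫ f = 0 := by rw [Category.assoc, hk.comp_zero, Limits.comp_zero]
    exact (hk.lift _ hb).unique hab rfl

theorem IsKer.existsUnique_diagonal {E Y M X Z : C} {h : X ⟶ Z} {m : M ⟶ X} (hm : IsKer h m)
    {e : E ⟶ Y} (he : ZeroEpi e) {f : E ⟶ M} {g : Y ⟶ X} (hsq : f ≫ m = e ≫ g) :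
    ∃! d : Y ⟶ M, d ≫ m = g ∧ e ≫ d = f := by
  have hgh : g ≫ h = 0 := he _ <| by
    rw [← Category.assoc, ← hsq, Category.assoc, hm.comp_zero, Limits.comp_zero]
  obtain ⟨d, hdm, hd_unique⟩ := hm.lift g hgh
  have : Mono m := hm.mono
  refine ⟨d, ⟨hdm, ?_⟩, fun d' hd' => hd_unique d' hd'.1⟩
  rw [← cancel_mono m, Category.assoc, hdm, hsq]

end Dagger

open Dagger in
/-- diagonal fill-in: in a commuting square `m ∘ f = g ∘ e` with
`e` a zero-epi and `m` a kernel, there is a unique diagonal `d` with `m ∘ d = g`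
and `d ∘ e = f`. -/
theorem stmt10 {C : Type u} [Category.{v} C] [HasZeroMorphisms C] [HasZeroObject C]
    [DagKerCat C] {E Y M X : C} (e : E ⟶ Y) (he : ZeroEpi e)
    (m : M ⟶ X) (hm : KernelMap m) (f : E ⟶ M) (g : Y ⟶ X)
    (hsq : f ≫ m = e ≫ g) :
    ∃! d : Y ⟶ M, d ≫ m = g ∧ e ≫ d = f := by
  obtain ⟨_, _, hker, -⟩ := hm
  exact hker.existsUnique_diagonal he hsq
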